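/- arXiv:1709.04720 — 3 statements merged into one kernel-verified Lean document; each statement's English description precedes it below -/
import Mathlib

section
/- For every even integer k ≥ 2 and every positive integer n, mi_k(n) ≥ 6^{⌊2n/(9k)⌋}. -/
open SimpleGraph

/-- `D` is a `k`-dominating independent set of `G`: `D` is independent and every vertex
outside `D` has at least `k` neighbours in `D`. -/
def IsKDIS {V : Type*} [Fintype V] (G : SimpleGraph V) (k : ℕ) (D : Finset V) : Prop :=
  (∀ x ∈ D, ∀ y ∈ D, ¬ G.Adj x y) ∧
  ∀ v : V, v ∉ D → k ≤ (G.neighborSet v ∩ (D : Set V)).ncard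

/-- The number of `k`-dominating independent sets of `G`. -/
noncomputable def numKDIS {V : Type*} [Fintype V] (G : SimpleGraph V) (k : ℕ) : ℕ :=
  Nat.card {D : Finset V // IsKDIS G k D}

/-- `mi k n`: the maximum number of `k`-dominating independent sets in a simple graph
on `n` vertices. -/
noncomputable def mi (k n : ℕ) : ℕ :=
  sSup {m : ℕ | ∃ G : SimpleGraph (Fin n), numKDIS G k = m}

/-- `mDIS k t`: the smallest `n` such that some simple graph on `n` vertices has at least
`t` `k`-dominating independent sets. -/
noncomputable def mDIS (k t : ℕ) : ℕ :=
  sInf {n : ℕ | ∃ G : SimpleGraph (Fin n), t ≤ numKDIS G k}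

/-!
Blowing up every vertex of a graph into an independent set of size `l` (the graph
`G.comap Prod.fst` on `V × Fin l`) turns `k`-DISes into `k l`-DISes. In the complement of the
`3 × 3` rook's graph the three rows and the three columns are `2`-DISes, so for `k = 2 l` its
blow-up has at least six `k`-DISes on `9 l` vertices. The `k`-DISes of a disjoint union are the
unions of `k`-DISes of the parts, so `mi k` is supermultiplicative,
`mi k a * mi k b ≤ mi k (a + b)`, and it is at least `1` (the edgeless graph). Hence
`6 ^ ⌊n / (9 l)⌋ ≤ mi k n`.
-/

open Finset

section

variable {V W : Type*} [Fintype V] [Fintype W] {G : SimpleGraph V} {H : SimpleGraph W} {k : ℕ}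

theorem isKDIS_iff_card_filter [DecidableRel G.Adj] {D : Finset V} :
    IsKDIS G k D ↔ (∀ x ∈ D, ∀ y ∈ D, ¬ G.Adj x y) ∧ ∀ v ∉ D, k ≤ #{w ∈ D | G.Adj v w} := by
  have hN : ∀ v, G.neighborSet v ∩ D = ↑{w ∈ D | G.Adj v w} := fun v => by
    ext; simp [and_comm]
  simp only [IsKDIS, hN, Set.ncard_coe_finset]

theorem IsKDIS.map_iso (f : G ≃g H) {D : Finset V} (hD : IsKDIS G k D) :
    IsKDIS H k (D.map f.toEquiv.toEmbedding) := by
  classical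
  rw [isKDIS_iff_card_filter] at hD ⊢
  refine ⟨?_, fun v hv => ?_⟩
  · simp only [mem_map]
    rintro _ ⟨x, hx, rfl⟩ _ ⟨y, hy, rfl⟩
    exact f.map_adj_iff.not.2 (hD.1 x hx y hy)
  · obtain ⟨u, rfl⟩ := f.surjective v
    rw [filter_map, card_map]
    simp only [Function.comp_def, Equiv.coe_toEmbedding, RelIso.coe_fn_toEquiv, f.map_adj_iff]
    exact hD.2 u fun hu => hv (mem_map_of_mem _ hu)

theorem numKDIS_le_of_iso (f : G ≃g H) : numKDIS G k ≤ numKDIS H k :=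
  Nat.card_le_card_of_injective (fun D => ⟨_, D.2.map_iso f⟩)
    fun _ _ h => Subtype.ext (map_injective _ (congrArg Subtype.val h))

theorem IsKDIS.sum {D : Finset V} {E : Finset W} (hD : IsKDIS G k D) (hE : IsKDIS H k E) :
    IsKDIS (G ⊕g H) k (D.disjSum E) := by
  classical
  rw [isKDIS_iff_card_filter] at hD hE ⊢
  refine ⟨?_, ?_⟩
  · rintro (x | x) hx (y | y) hy <;> simp_all
  · rintro (v | v) hv
    · have : {w ∈ D.disjSum E | (G ⊕g H).Adj (.inl v) w} = {w ∈ D | G.Adj v w}.map .inl := by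
        ext (w | w) <;> simp
      rw [this, card_map]
      exact hD.2 v (by simpa using hv)
    · have : {w ∈ D.disjSum E | (G ⊕g H).Adj (.inr v) w} = {w ∈ E | H.Adj v w}.map .inr := by
        ext (w | w) <;> simp
      rw [this, card_map]
      exact hE.2 v (by simpa using hv)

theorem numKDIS_mul_le_numKDIS_sum : numKDIS G k * numKDIS H k ≤ numKDIS (G ⊕g H) k := by
  rw [numKDIS, numKDIS, ← Nat.card_prod]
  exact Nat.card_le_card_of_injective
    (fun p : {D // IsKDIS G k D} × {E // IsKDIS H k E} => ⟨_, p.1.2.sum p.2.2⟩)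
    fun p q h => by simpa [Prod.ext_iff, Subtype.ext_iff] using h

theorem IsKDIS.comap_fst (U : Type*) [Fintype U] {D : Finset V} (hD : IsKDIS G k D) :
    IsKDIS (G.comap (Prod.fst : V × U → V)) (k * Fintype.card U) (D ×ˢ univ) := by
  classical
  rw [isKDIS_iff_card_filter] at hD ⊢
  refine ⟨fun x hx y hy => ?_, fun v hv => ?_⟩
  · exact hD.1 x.1 (mem_product.1 hx).1 y.1 (mem_product.1 hy).1
  · simp only [comap_adj, filter_product_left (G.Adj v.1), card_product, card_univ]
    exact Nat.mul_le_mul_right _ (hD.2 v.1 (by simpa using hv))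

theorem IsKDIS.bot : IsKDIS (⊥ : SimpleGraph V) k univ :=
  ⟨fun _ _ _ _ h => h, fun _ hv => absurd (mem_univ _) hv⟩

end

theorem finite_setOf_numKDIS (k n : ℕ) : {m | ∃ G : SimpleGraph (Fin n), numKDIS G k = m}.Finite :=
  Set.finite_range (numKDIS · k)

theorem exists_numKDIS_eq_mi (k n : ℕ) : ∃ G : SimpleGraph (Fin n), numKDIS G k = mi k n :=
  Nat.sSup_mem (Set.range_nonempty (numKDIS · k)) (finite_setOf_numKDIS k n).bddAbove

theorem numKDIS_le_mi {V : Type*} [Fintype V] (G : SimpleGraph V) (k : ℕ) :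
    numKDIS G k ≤ mi k (Fintype.card V) :=
  (numKDIS_le_of_iso (Iso.map (Fintype.equivFin V) G)).trans
    (le_csSup (finite_setOf_numKDIS _ _).bddAbove ⟨_, rfl⟩)

theorem one_le_mi (k n : ℕ) : 1 ≤ mi k n := by
  have : Nonempty {D // IsKDIS (⊥ : SimpleGraph (Fin n)) k D} := ⟨⟨univ, IsKDIS.bot⟩⟩
  have : 1 ≤ numKDIS (⊥ : SimpleGraph (Fin n)) k := Nat.card_pos
  simpa using this.trans (numKDIS_le_mi ⊥ k)

theorem mi_mul_mi_le_mi_add (k a b : ℕ) : mi k a * mi k b ≤ mi k (a + b) := by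
  obtain ⟨G, hG⟩ := exists_numKDIS_eq_mi k a
  obtain ⟨H, hH⟩ := exists_numKDIS_eq_mi k b
  calc mi k a * mi k b = numKDIS G k * numKDIS H k := by rw [hG, hH]
    _ ≤ numKDIS (G ⊕g H) k := numKDIS_mul_le_numKDIS_sum
    _ ≤ mi k (a + b) := by simpa using numKDIS_le_mi (G ⊕g H) k

theorem mi_mono (k : ℕ) : Monotone (mi k) := by
  intro a b hab
  obtain ⟨d, rfl⟩ := Nat.exists_eq_add_of_le hab
  calc mi k a = mi k a * 1 := (mul_one _).symm
    _ ≤ mi k a * mi k d := Nat.mul_le_mul_left _ (one_le_mi k d)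
    _ ≤ mi k (a + d) := mi_mul_mi_le_mi_add k a d

theorem mi_pow_le_mi_mul (k c m : ℕ) : mi k c ^ m ≤ mi k (m * c) := by
  induction m with
  | zero => simpa using one_le_mi k 0
  | succ m ih =>
    calc mi k c ^ (m + 1) = mi k c ^ m * mi k c := pow_succ _ _
      _ ≤ mi k (m * c) * mi k c := Nat.mul_le_mul_right _ ih
      _ ≤ mi k ((m + 1) * c) := by simpa [add_mul] using mi_mul_mi_le_mi_add k (m * c) c

def rookComplement : SimpleGraph (Fin 3 × Fin 3) where
  Adj p q := p.1 ≠ q.1 ∧ p.2 ≠ q.2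
  symm := ⟨fun _ _ h => ⟨h.1.symm, h.2.symm⟩⟩
  loopless := ⟨fun _ h => h.1 rfl⟩

instance : DecidableRel rookComplement.Adj := fun p q =>
  inferInstanceAs (Decidable (p.1 ≠ q.1 ∧ p.2 ≠ q.2))

def boardLine : Fin 3 ⊕ Fin 3 → Finset (Fin 3 × Fin 3)
  | .inl i => {p | p.1 = i}
  | .inr j => {p | p.2 = j}

theorem boardLine_injective : Function.Injective boardLine := by decide

theorem isKDIS_boardLine (s : Fin 3 ⊕ Fin 3) : IsKDIS rookComplement 2 (boardLine s) := by
  rw [isKDIS_iff_card_filter]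
  revert s
  decide

theorem six_le_numKDIS_comap_fst (U : Type*) [Fintype U] [Nonempty U] :
    6 ≤ numKDIS (rookComplement.comap (Prod.fst : _ × U → _)) (2 * Fintype.card U) := by
  classical
  calc 6 = Nat.card (Fin 3 ⊕ Fin 3) := by simp
    _ ≤ _ := Nat.card_le_card_of_injective
      (fun s => ⟨boardLine s ×ˢ univ, (isKDIS_boardLine s).comap_fst U⟩)
      fun s t h => boardLine_injective <| by
        simpa [product_image_fst univ_nonempty] using congrArg (image Prod.fst ∘ Subtype.val) h

theorem six_le_mi (l : ℕ) (hl : 0 < l) : 6 ≤ mi (2 * l) (9 * l) := by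
  have : Nonempty (Fin l) := ⟨⟨0, hl⟩⟩
  simpa [mul_comm] using (six_le_numKDIS_comap_fst (Fin l)).trans (numKDIS_le_mi _ _)

theorem mi_lower_bound_even_general (k n : ℕ) (hk : 2 ≤ k) (hke : Even k) :
    6 ^ (2 * n / (9 * k)) ≤ mi k n := by
  obtain ⟨l, rfl⟩ := hke
  have hdiv : 2 * n / (9 * (l + l)) = n / (9 * l) := by
    rw [show 9 * (l + l) = 2 * (9 * l) by ring, Nat.mul_div_mul_left _ _ two_pos]
  rw [hdiv, ← two_mul]
  calc 6 ^ (n / (9 * l)) ≤ mi (2 * l) (9 * l) ^ (n / (9 * l)) :=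
        Nat.pow_le_pow_left (six_le_mi l (by omega)) _
    _ ≤ mi (2 * l) (n / (9 * l) * (9 * l)) := mi_pow_le_mi_mul _ _ _
    _ ≤ mi (2 * l) n := mi_mono _ (Nat.div_mul_le_self n _)

theorem mi_lower_bound_even (k n : ℕ) (hk : 2 ≤ k) (hke : Even k) (hn : 1 ≤ n) :
    6 ^ (2 * n / (9 * k)) ≤ mi k n :=
  mi_lower_bound_even_general k n hk hke
end

section
/- For all positive integers k, l and t, one has m(kl, t) ≤ l · m(k, t). -/
open SimpleGraph

/-!
Blow every vertex of a graph `G` up into `l` pairwise non-adjacent copies, copies of adjacent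
vertices being adjacent. The preimage of a `k`-DIS `D` of `G` is then independent, and a vertex
outside it sees all `l` copies of each of its at least `k` neighbours in `D`, so it is a
`kl`-DIS; distinct `D` give distinct preimages.
-/

namespace SimpleGraph

variable {V W ι : Type*} [Fintype V] [Fintype W] [Fintype ι]

theorem numKDIS_antitone (G : SimpleGraph V) : Antitone (numKDIS G) := fun _ _ hkk' =>
  Nat.card_le_card_of_injective (fun D => ⟨D.1, D.2.1, fun v hv => hkk'.trans (D.2.2 v hv)⟩)
    fun _ _ h => Subtype.ext (Subtype.mk.inj h)

theorem IsKDIS.map {G : SimpleGraph V} {G' : SimpleGraph W} (e : G ≃g G') {k : ℕ}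
    {D : Finset V} (hD : IsKDIS G k D) : IsKDIS G' k (D.map e.toEquiv.toEmbedding) := by
  refine ⟨?_, fun w hw => ?_⟩
  · simp only [Finset.mem_map]
    rintro _ ⟨x, hx, rfl⟩ _ ⟨y, hy, rfl⟩
    exact fun h => hD.1 x hx y hy (e.map_adj_iff.1 h)
  · obtain ⟨v, rfl⟩ := e.surjective w
    have hv : v ∉ D := fun h => hw (Finset.mem_map_of_mem _ h)
    have himage : G'.neighborSet (e v) ∩ ↑(D.map e.toEquiv.toEmbedding) =
        e '' (G.neighborSet v ∩ ↑D) := by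
      ext w
      obtain ⟨u, rfl⟩ := e.surjective w
      simp [Iso.map_adj_iff]
    rw [himage, Set.ncard_image_of_injective _ e.injective]
    exact hD.2 v hv

theorem Iso.numKDIS_le {G : SimpleGraph V} {G' : SimpleGraph W} (e : G ≃g G') (k : ℕ) :
    numKDIS G k ≤ numKDIS G' k :=
  Nat.card_le_card_of_injective (fun D => ⟨D.1.map e.toEquiv.toEmbedding, D.2.map e⟩)
    fun _ _ h => Subtype.ext (Finset.map_injective _ (Subtype.mk.inj h))

theorem Iso.numKDIS_eq {G : SimpleGraph V} {G' : SimpleGraph W} (e : G ≃g G') (k : ℕ) :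
    numKDIS G k = numKDIS G' k :=
  (e.numKDIS_le k).antisymm (e.symm.numKDIS_le k)

theorem IsKDIS.comap_snd {G : SimpleGraph V} {k : ℕ} {D : Finset V} (hD : IsKDIS G k D) :
    IsKDIS (G.comap (Prod.snd : ι × V → V)) (Fintype.card ι * k) (Finset.univ ×ˢ D) := by
  refine ⟨fun x hx y hy => hD.1 _ (Finset.mem_product.1 hx).2 _ (Finset.mem_product.1 hy).2,
    fun ⟨i, v⟩ hiv => ?_⟩
  have hv : v ∉ D := fun h => hiv (Finset.mem_product.2 ⟨Finset.mem_univ i, h⟩)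
  have hprod : (G.comap Prod.snd).neighborSet (i, v) ∩ ↑((Finset.univ : Finset ι) ×ˢ D) =
      (Set.univ : Set ι) ×ˢ (G.neighborSet v ∩ ↑D) := by
    ext ⟨j, w⟩
    simp
  rw [hprod, Set.ncard_prod, Set.ncard_univ, Nat.card_eq_fintype_card]
  exact Nat.mul_le_mul_left _ (hD.2 v hv)

theorem numKDIS_le_numKDIS_comap_snd [Nonempty ι] (G : SimpleGraph V) (k : ℕ) :
    numKDIS G k ≤ numKDIS (G.comap (Prod.snd : ι × V → V)) (Fintype.card ι * k) := by
  refine Nat.card_le_card_of_injective (fun D => ⟨_, D.2.comap_snd⟩) fun D D' h => ?_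
  have hD := Subtype.mk.inj h
  ext v
  obtain ⟨i⟩ := ‹Nonempty ι›
  simpa using congrArg ((i, v) ∈ ·) hD

end SimpleGraph

open SimpleGraph

theorem mDIS_le_card {V : Type*} [Fintype V] {G : SimpleGraph V} {k t : ℕ}
    (h : t ≤ numKDIS G k) : mDIS k t ≤ Fintype.card V :=
  Nat.sInf_le ⟨G.map (Fintype.equivFin V).toEmbedding,
    h.trans_eq ((Iso.map (Fintype.equivFin V) G).numKDIS_eq k)⟩

theorem mDIS_mul_le_general (k l t : ℕ) (hl : 1 ≤ l) :
    mDIS (k * l) t ≤ l * mDIS k t := by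
  by_cases hex : {n : ℕ | ∃ G : SimpleGraph (Fin n), t ≤ numKDIS G k}.Nonempty
  · obtain ⟨G, hG⟩ : ∃ G : SimpleGraph (Fin (mDIS k t)), t ≤ numKDIS G k := Nat.sInf_mem hex
    have : Nonempty (Fin l) := ⟨⟨0, hl⟩⟩
    have hblowup : t ≤ numKDIS (G.comap (Prod.snd : Fin l × _ → _)) (k * l) := by
      simpa [mul_comm k] using hG.trans (numKDIS_le_numKDIS_comap_snd (ι := Fin l) G k)
    simpa using mDIS_le_card hblowup
  · -- `mDIS k t = sInf ∅ = 0`, and no graph has `t` `kl`-DISes either since `numKDIS` is antitone.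
    suffices mDIS (k * l) t = 0 by omega
    refine Nat.sInf_eq_zero.2 (Or.inr (Set.eq_empty_of_forall_notMem ?_))
    rintro n ⟨G, hG⟩
    exact hex ⟨n, G, hG.trans (numKDIS_antitone G (Nat.le_mul_of_pos_right k hl))⟩

theorem mDIS_mul_le (k l t : ℕ) (hk : 1 ≤ k) (hl : 1 ≤ l) (ht : 1 ≤ t) :
    mDIS (k * l) t ≤ l * mDIS k t :=
  mDIS_mul_le_general k l t hl
end

section
/- For every integer n ≥ 2, the maximum number of maximal independent sets in a simple graph on n vertices is: 3^{n/3} if n ≡ 0 (mod 3); (4/3)·3^{⌊n/3⌋} if n ≡ 1 (mod 3); and 2·3^{⌊n/3⌋} if n ≡ 2 (mod 3). That is, mi_1(n) equals this value. -/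
/-!
The `1`-dominating independent sets are exactly the maximal independent sets. Let `f n` be the
claimed maximum (`moonMoserBound n`). For the upper bound, take a vertex `v` of minimum degree
`d`. Every maximal independent set meets the closed neighbourhood `N[v]`, and those containing a
given `u ∈ N[v]` restrict injectively to maximal independent sets of `G - N[u]`, a graph on at
most `n - 1 - d` vertices. By induction the count is at most `(d + 1) * f (n - 1 - d) ≤ f n`.
For the lower bound, the count is multiplicative over disjoint unions and equals `m` on `K_m`,
so a disjoint union of triangles, with one `K₄` or one `K₂` according to `n % 3`, attains `f n`.
-/

open SimpleGraph

/-- The general formula would give `4` at `n = 1`, where `n / 3 - 1` truncates to `0`. -/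
def moonMoserBound (n : ℕ) : ℕ :=
  if n = 1 then 1
  else if n % 3 = 0 then 3 ^ (n / 3)
  else if n % 3 = 1 then 4 * 3 ^ (n / 3 - 1)
  else 2 * 3 ^ (n / 3)

theorem moonMoserBound_add_three {m : ℕ} (hm : 2 ≤ m) :
    moonMoserBound (m + 3) = 3 * moonMoserBound m := by
  have hdiv : (m + 3) / 3 = m / 3 + 1 := by omega
  have hpos : m % 3 = 1 → 1 ≤ m / 3 := by omega
  unfold moonMoserBound
  simp only [Nat.add_mod_right, hdiv, if_neg (show m + 3 ≠ 1 by omega),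
    if_neg (show m ≠ 1 by omega)]
  split_ifs with h0 h1
  · ring
  · rw [show m / 3 + 1 - 1 = m / 3 - 1 + 1 by omega]; ring
  · ring

theorem mul_moonMoserBound_le_of_le_four {k : ℕ} (hk : k ≤ 4) (m : ℕ) :
    k * moonMoserBound m ≤ moonMoserBound (m + k) := by
  induction m using Nat.strong_induction_on with
  | _ m ih =>
    obtain hm | hm := lt_or_ge m 5
    · interval_cases m <;> interval_cases k <;> decide
    · obtain ⟨m, rfl⟩ : ∃ m', m = m' + 3 := ⟨m - 3, by omega⟩
      rw [moonMoserBound_add_three (by omega), show m + 3 + k = m + k + 3 by omega,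
        moonMoserBound_add_three (by omega), mul_left_comm]
      exact Nat.mul_le_mul_left 3 (ih m (by omega))

theorem mul_moonMoserBound_le (k m : ℕ) : k * moonMoserBound m ≤ moonMoserBound (m + k) := by
  induction k using Nat.strong_induction_on with
  | _ k ih =>
    obtain hk | hk := le_or_gt k 4
    · exact mul_moonMoserBound_le_of_le_four hk m
    · calc k * moonMoserBound m ≤ 3 * ((k - 3) * moonMoserBound m) := by
            rw [← mul_assoc]; exact Nat.mul_le_mul_right _ (by omega)
        _ ≤ 3 * moonMoserBound (m + (k - 3)) := Nat.mul_le_mul_left 3 (ih (k - 3) (by omega))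
        _ ≤ moonMoserBound (m + (k - 3) + 3) := mul_moonMoserBound_le_of_le_four (by norm_num) _
        _ = moonMoserBound (m + k) := by congr 1; omega

theorem moonMoserBound_monotone : Monotone moonMoserBound :=
  monotone_nat_of_le_succ fun n => by simpa using mul_moonMoserBound_le 1 n

def SimpleGraph.closedNeighborSet {V : Type*} (G : SimpleGraph V) (v : V) : Set V :=
  insert v (G.neighborSet v)

section

variable {V W : Type*} [Fintype V] [Fintype W]

theorem isKDIS_one_iff (G : SimpleGraph V) (D : Finset V) :
    IsKDIS G 1 D ↔
      (∀ x ∈ D, ∀ y ∈ D, ¬ G.Adj x y) ∧ ∀ v ∉ D, ∃ u ∈ D, G.Adj v u := by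
  have hpos (v : V) : 1 ≤ (G.neighborSet v ∩ D).ncard ↔ ∃ u ∈ D, G.Adj v u := by
    rw [Nat.one_le_iff_ne_zero, ← pos_iff_ne_zero, Set.ncard_pos, Set.inter_nonempty]
    simp only [mem_neighborSet, Finset.mem_coe, and_comm]
  simp only [IsKDIS, hpos]

theorem numKDIS_of_isEmpty [IsEmpty V] (G : SimpleGraph V) (k : ℕ) : numKDIS G k = 1 :=
  Nat.card_eq_one_iff_unique.2 ⟨inferInstance, ⟨⟨∅, isEmptyElim, isEmptyElim⟩⟩⟩

theorem SimpleGraph.Iso.isKDIS_map_iff {G : SimpleGraph V} {H : SimpleGraph W} (e : G ≃g H)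
    (k : ℕ) (D : Finset V) : IsKDIS H k (D.map e.toEquiv.toEmbedding) ↔ IsKDIS G k D := by
  have hadj (x y : V) : H.Adj (e.toEquiv.toEmbedding x) (e.toEquiv.toEmbedding y) ↔ G.Adj x y :=
    e.map_adj_iff
  have hmem (x : V) : e x ∈ D.map e.toEquiv.toEmbedding ↔ x ∈ D := Finset.mem_map' _
  have hnbhd (v : V) : H.neighborSet (e v) ∩ ↑(D.map e.toEquiv.toEmbedding) =
      e '' (G.neighborSet v ∩ D) := by
    rw [Set.image_inter e.injective, e.image_neighborSet, Finset.coe_map]; rfl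
  simp only [IsKDIS, Finset.forall_mem_map, hadj, e.surjective.forall, hmem, hnbhd,
    Set.ncard_image_of_injective _ e.injective]

theorem numKDIS_congr {G : SimpleGraph V} {H : SimpleGraph W} (e : G ≃g H) (k : ℕ) :
    numKDIS G k = numKDIS H k :=
  Nat.card_congr <| e.toEquiv.finsetCongr.subtypeEquiv fun D => (e.isKDIS_map_iff k D).symm

theorem isKDIS_sum_iff (G : SimpleGraph V) (H : SimpleGraph W) (k : ℕ) (D : Finset (V ⊕ W)) :
    IsKDIS (G ⊕g H) k D ↔ IsKDIS G k D.toLeft ∧ IsKDIS H k D.toRight := by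
  have hl (v : V) : (G ⊕g H).neighborSet (.inl v) ∩ D =
      Sum.inl '' (G.neighborSet v ∩ D.toLeft) := by
    ext (x | x) <;> simp
  have hr (w : W) : (G ⊕g H).neighborSet (.inr w) ∩ D =
      Sum.inr '' (H.neighborSet w ∩ D.toRight) := by
    ext (x | x) <;> simp
  simp [IsKDIS, Sum.forall, hl, hr, Set.ncard_image_of_injective _ Sum.inl_injective,
    Set.ncard_image_of_injective _ Sum.inr_injective]
  exact and_and_and_comm

theorem numKDIS_sum (G : SimpleGraph V) (H : SimpleGraph W) (k : ℕ) :
    numKDIS (G ⊕g H) k = numKDIS G k * numKDIS H k := by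
  rw [numKDIS, numKDIS, numKDIS, ← Nat.card_prod]
  exact Nat.card_congr <| (Finset.sumEquiv.toEquiv.subtypeEquiv (isKDIS_sum_iff G H k)).trans
    Equiv.subtypeProdEquivProd

theorem isKDIS_top_one_iff [Nonempty V] (D : Finset V) :
    IsKDIS (⊤ : SimpleGraph V) 1 D ↔ ∃ a, {a} = D := by
  simp only [isKDIS_one_iff, top_adj, not_not]
  constructor
  · rintro ⟨hind, hdom⟩
    obtain ⟨a, ha⟩ : D.Nonempty := by
      by_contra hD
      obtain ⟨u, hu, -⟩ := hdom (Classical.arbitrary V) fun h => hD ⟨_, h⟩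
      exact hD ⟨u, hu⟩
    exact ⟨a, (Finset.eq_singleton_iff_unique_mem.2 ⟨ha, fun b hb => hind b hb a ha⟩).symm⟩
  · rintro ⟨a, rfl⟩
    simp

theorem numKDIS_top_one [Nonempty V] : numKDIS (⊤ : SimpleGraph V) 1 = Fintype.card V := by
  rw [numKDIS, ← Nat.card_eq_fintype_card,
    ← Nat.card_range_of_injective (Finset.singleton_injective (α := V))]
  exact Nat.card_congr (Equiv.subtypeEquivRight isKDIS_top_one_iff)

theorem SimpleGraph.card_compl_closedNeighborSet (G : SimpleGraph V) [DecidableRel G.Adj]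
    (u : V) : Nat.card ↥(G.closedNeighborSet u)ᶜ = Fintype.card V - (G.degree u + 1) := by
  rw [Nat.card_coe_set_eq, Set.ncard_compl, closedNeighborSet,
    Set.ncard_insert_of_notMem G.notMem_neighborSet_self, ← card_neighborSet_eq_degree,
    ← Nat.card_coe_set_eq, Nat.card_eq_fintype_card, Nat.card_eq_fintype_card]

theorem IsKDIS.exists_mem_insert_neighborFinset [DecidableEq V] {G : SimpleGraph V}
    [DecidableRel G.Adj] {D : Finset V} (hD : IsKDIS G 1 D) (v : V) :
    ∃ u ∈ insert v (G.neighborFinset v), u ∈ D := by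
  by_cases hv : v ∈ D
  · exact ⟨v, Finset.mem_insert_self v _, hv⟩
  · obtain ⟨u, hu, hvu⟩ := ((isKDIS_one_iff G D).1 hD).2 v hv
    exact ⟨u, Finset.mem_insert_of_mem ((G.mem_neighborFinset v u).2 hvu), hu⟩

open Classical in
theorem IsKDIS.induce_compl_closedNeighborSet {G : SimpleGraph V} {D : Finset V} {u : V}
    (hD : IsKDIS G 1 D) (hu : u ∈ D) :
    IsKDIS (G.induce (G.closedNeighborSet u)ᶜ) 1
      (D.subtype (· ∈ (G.closedNeighborSet u)ᶜ)) := by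
  rw [isKDIS_one_iff] at hD ⊢
  obtain ⟨hind, hdom⟩ := hD
  refine ⟨fun x hx y hy => by simpa using hind x (by simpa using hx) y (by simpa using hy), ?_⟩
  rintro ⟨w, hw⟩ hwD
  obtain ⟨x, hx, hwx⟩ := hdom w (by simpa using hwD)
  have hxS : x ∈ (G.closedNeighborSet u)ᶜ := by
    simp only [closedNeighborSet, Set.mem_compl_iff, Set.mem_insert_iff, mem_neighborSet,
      not_or] at hw ⊢
    exact ⟨by rintro rfl; exact hw.2 hwx.symm, hind u hu x hx⟩
  exact ⟨⟨x, hxS⟩, by simpa using hx, by simpa using hwx⟩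

open Classical in
theorem IsKDIS.eq_insert_map_subtype_compl_closedNeighborSet {G : SimpleGraph V}
    {D : Finset V} {u : V} (hD : IsKDIS G 1 D) (hu : u ∈ D) :
    D = insert u
      ((D.subtype (· ∈ (G.closedNeighborSet u)ᶜ)).map (Function.Embedding.subtype _)) := by
  rw [Finset.subtype_map]
  ext x
  simp only [Finset.mem_insert, Finset.mem_filter, closedNeighborSet, Set.mem_compl_iff,
    Set.mem_insert_iff, mem_neighborSet, not_or]
  constructor
  · intro hx
    by_cases hxu : x = u
    · exact .inl hxu
    · exact .inr ⟨hx, hxu, hD.1 u hu x hx⟩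
  · rintro (rfl | ⟨hx, -⟩) <;> assumption

open Classical in
theorem card_isKDIS_one_mem_le_numKDIS_induce (G : SimpleGraph V) (u : V) :
    Nat.card {D : Finset V // IsKDIS G 1 D ∧ u ∈ D} ≤
      numKDIS (G.induce (G.closedNeighborSet u)ᶜ) 1 := by
  refine Nat.card_le_card_of_injective
    (fun D => ⟨_, D.2.1.induce_compl_closedNeighborSet D.2.2⟩) fun D₁ D₂ h => ?_
  rw [Subtype.ext_iff, D₁.2.1.eq_insert_map_subtype_compl_closedNeighborSet D₁.2.2,
    D₂.2.1.eq_insert_map_subtype_compl_closedNeighborSet D₂.2.2]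
  simp only [Subtype.ext_iff] at h
  rw [h]

theorem numKDIS_one_le_sum_card_mem [DecidableEq V] (G : SimpleGraph V) [DecidableRel G.Adj]
    (v : V) : numKDIS G 1 ≤ ∑ u ∈ insert v (G.neighborFinset v),
      Nat.card {D : Finset V // IsKDIS G 1 D ∧ u ∈ D} := by
  classical
  simp only [numKDIS, Nat.card_eq_fintype_card, Fintype.card_subtype]
  refine (Finset.card_le_card fun D hD => ?_).trans Finset.card_biUnion_le
  simp only [Finset.mem_filter, Finset.mem_univ, true_and, Finset.mem_biUnion] at hD ⊢
  obtain ⟨u, hu, huD⟩ := hD.exists_mem_insert_neighborFinset v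
  exact ⟨u, hu, hD, huD⟩

theorem numKDIS_one_le_moonMoserBound (G : SimpleGraph V) :
    numKDIS G 1 ≤ moonMoserBound (Fintype.card V) := by
  induction hn : Fintype.card V using Nat.strong_induction_on generalizing V with
  | _ n ih =>
  classical
  obtain hV | hV := isEmpty_or_nonempty V
  · rw [numKDIS_of_isEmpty, ← hn, Fintype.card_eq_zero]; rfl
  obtain ⟨v, hv⟩ := G.exists_minimal_degree_vertex
  have hdn : G.minDegree < n := hn ▸ hv ▸ G.degree_lt_card_verts v
  have hpiece (u : V) : Nat.card {D : Finset V // IsKDIS G 1 D ∧ u ∈ D} ≤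
      moonMoserBound (n - 1 - G.minDegree) := by
    have hcard := G.card_compl_closedNeighborSet u
    rw [Nat.card_eq_fintype_card, hn] at hcard
    refine (card_isKDIS_one_mem_le_numKDIS_induce G u).trans ((ih _ (by omega) _ hcard).trans ?_)
    exact moonMoserBound_monotone (by have := G.minDegree_le_degree u; omega)
  calc numKDIS G 1
      ≤ ∑ u ∈ insert v (G.neighborFinset v),
          Nat.card {D : Finset V // IsKDIS G 1 D ∧ u ∈ D} :=
        numKDIS_one_le_sum_card_mem G v
    _ ≤ ∑ _u ∈ insert v (G.neighborFinset v), moonMoserBound (n - 1 - G.minDegree) :=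
        Finset.sum_le_sum fun u _ => hpiece u
    _ = (G.minDegree + 1) * moonMoserBound (n - 1 - G.minDegree) := by
        rw [Finset.sum_const, Finset.card_insert_of_notMem (G.notMem_neighborFinset_self v),
          card_neighborFinset_eq_degree, hv, smul_eq_mul]
    _ ≤ moonMoserBound (n - 1 - G.minDegree + (G.minDegree + 1)) := mul_moonMoserBound_le _ _
    _ = moonMoserBound n := by congr 1; omega

end

theorem exists_numKDIS_one_eq_mul {n a m : ℕ} (h : ∃ G : SimpleGraph (Fin n), numKDIS G 1 = a)
    (hm : 0 < m) : ∃ G : SimpleGraph (Fin (n + m)), numKDIS G 1 = a * m := by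
  obtain ⟨G, rfl⟩ := h
  have : Nonempty (Fin m) := Fin.pos_iff_nonempty.1 hm
  refine ⟨(G ⊕g ⊤).map finSumFinEquiv, ?_⟩
  rw [← numKDIS_congr (Iso.map finSumFinEquiv _), numKDIS_sum, numKDIS_top_one, Fintype.card_fin]

theorem exists_numKDIS_one_eq_moonMoserBound (n : ℕ) :
    ∃ G : SimpleGraph (Fin n), numKDIS G 1 = moonMoserBound n := by
  induction n using Nat.strong_induction_on with
  | _ n ih =>
  have hempty : ∃ G : SimpleGraph (Fin 0), numKDIS G 1 = 1 := ⟨⊥, numKDIS_of_isEmpty _ _⟩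
  obtain rfl | ⟨hpos, hle⟩ | hlarge : n = 0 ∨ (0 < n ∧ n ≤ 4) ∨ 5 ≤ n := by omega
  · exact hempty
  · have hclique := exists_numKDIS_one_eq_mul hempty hpos
    rw [zero_add, one_mul] at hclique
    interval_cases n <;> exact hclique
  · obtain ⟨m, rfl⟩ : ∃ m, n = m + 3 := ⟨n - 3, by omega⟩
    rw [moonMoserBound_add_three (by omega), mul_comm]
    exact exists_numKDIS_one_eq_mul (ih m (by omega)) (by norm_num)

theorem mi_one_eq_moonMoserBound (n : ℕ) : mi 1 n = moonMoserBound n := by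
  refine IsGreatest.csSup_eq ⟨exists_numKDIS_one_eq_moonMoserBound n, ?_⟩
  rintro _ ⟨G, rfl⟩
  simpa using numKDIS_one_le_moonMoserBound G

theorem moon_moser (n : ℕ) (hn : 2 ≤ n) :
    (n % 3 = 0 → mi 1 n = 3 ^ (n / 3)) ∧
    (n % 3 = 1 → mi 1 n = 4 * 3 ^ (n / 3 - 1)) ∧
    (n % 3 = 2 → mi 1 n = 2 * 3 ^ (n / 3)) := by
  simp only [mi_one_eq_moonMoserBound, moonMoserBound, if_neg (show n ≠ 1 by omega)]
  refine ⟨fun h => ?_, fun h => ?_, fun h => ?_⟩ <;> simp [h]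
end
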